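/- Let B be a reduced abelian p-group, S a finite subgroup of B, and β an ordinal. Then: (i) for every x ∈ S ∩ B_β with px ∈ B_{β+2} there exists y ∈ B_{β+1} with py = px; (ii) for any such y, the element x − y lies in P_β(B); (iii) the coset of x − y in P_β(B)/P_{β+1}(B) does not depend on the choice of y; and (iv) the assignment x ↦ (coset of x − y) induces a well-defined injective ℤ/pℤ-linear map F : (S ∩ B_β ∩ p^{-1}B_{β+2})/(S ∩ B_{β+1}) → P_β(B)/P_{β+1}(B), where p^{-1}B_{β+2} = {x ∈ B : px ∈ B_{β+2}}. -/

import Mathlib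

open Ordinal

/-- Scalar multiplication by `p` as an additive group homomorphism. -/
def pHom (p : ℕ) (G : Type*) [AddCommGroup G] : G →+ G :=
  AddMonoidHom.mk' (fun x => p • x) (fun a b => smul_add p a b)

@[simp] lemma pHom_apply (p : ℕ) {G : Type*} [AddCommGroup G] (x : G) :
    pHom p G x = p • x := rfl

/-- The Ulm subgroups `G_β`: `G_0 = G`, `G_{β+1} = pG_β`, and intersections at limits. -/
noncomputable def ulmSub (p : ℕ) (G : Type*) [AddCommGroup G] (β : Ordinal.{0}) :
    AddSubgroup G :=
  Ordinal.limitRecOn β ⊤ (fun _ H => AddSubgroup.map (pHom p G) H)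
    (fun o _ ih => ⨅ (γ : Ordinal.{0}) (h : γ < o), ih γ h)

lemma ulmSub_succ (p : ℕ) (G : Type*) [AddCommGroup G] (β : Ordinal.{0}) :
    ulmSub p G (β + 1) = AddSubgroup.map (pHom p G) (ulmSub p G β) := by
  unfold ulmSub
  rw [Ordinal.add_one_eq_succ, Ordinal.limitRecOn_succ]

lemma ulmSub_succ_le (p : ℕ) (G : Type*) [AddCommGroup G] (β : Ordinal.{0}) :
    ulmSub p G (β + 1) ≤ ulmSub p G β := by
  rw [ulmSub_succ]
  rintro x ⟨y, hy, rfl⟩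
  simpa using (ulmSub p G β).nsmul_mem hy p

/-- An abelian `p`-group: every element is killed by some power of `p`. -/
def IsAbelianPGroup (p : ℕ) (G : Type*) [AddCommGroup G] : Prop :=
  ∀ x : G, ∃ n : ℕ, p ^ n • x = 0

/-- The length `λ(G)`: the least ordinal `β` with `G_β = G_{β+1}`. -/
noncomputable def ulmLength (p : ℕ) (G : Type*) [AddCommGroup G] : Ordinal.{0} :=
  sInf {β : Ordinal.{0} | ulmSub p G β = ulmSub p G (β + 1)}

/-- `G` is reduced if `G_{λ(G)} = {0}`. -/
def IsReducedPGroup (p : ℕ) (G : Type*) [AddCommGroup G] : Prop :=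
  ulmSub p G (ulmLength p G) = ⊥

/-- `P_β(G) = {x ∈ G_β : px = 0}`. -/
noncomputable def ulmP (p : ℕ) (G : Type*) [AddCommGroup G] (β : Ordinal.{0}) : AddSubgroup G :=
  (pHom p G).ker ⊓ ulmSub p G β

/-- The quotient `P_β(G)/P_{β+1}(G)` (as a quotient of `P_β(G)` by the subgroup
corresponding to `P_{β+1}(G)`). -/
noncomputable def ulmQuot (p : ℕ) (G : Type*) [AddCommGroup G] (β : Ordinal.{0}) :=
  (ulmP p G β) ⧸ ((ulmP p G (β + 1)).addSubgroupOf (ulmP p G β))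

noncomputable instance (p : ℕ) (G : Type*) [AddCommGroup G] (β : Ordinal.{0}) :
    AddCommGroup (ulmQuot p G β) :=
  inferInstanceAs (AddCommGroup ((ulmP p G β) ⧸ ((ulmP p G (β + 1)).addSubgroupOf (ulmP p G β))))

noncomputable instance (p : ℕ) (G : Type*) [AddCommGroup G] (β : Ordinal.{0}) :
    Module (ZMod p) (ulmQuot p G β) :=
  QuotientAddGroup.zmodModule (by
    intro x
    simp only [AddSubgroup.mem_addSubgroupOf]
    have hx : ((p • x : ulmP p G β) : G) = 0 := by
      have := x.2.1
      change p • (x : G) = 0 at this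
      simpa using this
    rw [hx]
    exact (ulmP p G (β + 1)).zero_mem)

/-- The Ulm invariant `u_β(G)`: the dimension of `P_β(G)/P_{β+1}(G)` over `ℤ/pℤ`. -/
noncomputable def ulmInvariant (p : ℕ) (G : Type*) [AddCommGroup G] (β : Ordinal.{0}) :
    Cardinal :=
  Module.rank (ZMod p) (ulmQuot p G β)

open Classical in
/-- The height of `x`: the unique ordinal `β` with `x ∈ G_β \ G_{β+1}` if it exists, and `∞`
(= `⊤`) otherwise. -/
noncomputable def height (p : ℕ) {G : Type*} [AddCommGroup G] (x : G) : WithTop Ordinal.{0} :=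
  if ∃ β : Ordinal.{0}, x ∈ ulmSub p G β ∧ x ∉ ulmSub p G (β + 1) then
    ((sInf {β : Ordinal.{0} | x ∈ ulmSub p G β ∧ x ∉ ulmSub p G (β + 1)} : Ordinal.{0}) :
      WithTop Ordinal.{0})
  else ⊤

/-- `d` is proper with respect to `S` if `h(d) ≥ h(d+s)` for every `s ∈ S`. -/
def ProperWRT (p : ℕ) {G : Type*} [AddCommGroup G] (S : AddSubgroup G) (d : G) : Prop :=
  ∀ s ∈ S, height p (d + s) ≤ height p d

/-- The subgroup `S ∩ B_β ∩ p⁻¹B_{β+2}`, where `p⁻¹B_{β+2} = {x : px ∈ B_{β+2}}`. -/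
noncomputable def kapSub (p : ℕ) {B : Type*} [AddCommGroup B] (S : AddSubgroup B)
    (β : Ordinal.{0}) : AddSubgroup B :=
  S ⊓ ulmSub p B β ⊓ (ulmSub p B (β + 2)).comap (pHom p B)

/-- The quotient `(S ∩ B_β ∩ p⁻¹B_{β+2}) / (S ∩ B_{β+1})`. -/
noncomputable def kapQuot (p : ℕ) {B : Type*} [AddCommGroup B] (S : AddSubgroup B)
    (β : Ordinal.{0}) :=
  kapSub p S β ⧸ ((S ⊓ ulmSub p B (β + 1)).addSubgroupOf (kapSub p S β))

noncomputable instance (p : ℕ) {B : Type*} [AddCommGroup B] (S : AddSubgroup B)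
    (β : Ordinal.{0}) : AddCommGroup (kapQuot p S β) :=
  inferInstanceAs
    (AddCommGroup (kapSub p S β ⧸ ((S ⊓ ulmSub p B (β + 1)).addSubgroupOf (kapSub p S β))))

noncomputable instance (p : ℕ) {B : Type*} [AddCommGroup B] (S : AddSubgroup B)
    (β : Ordinal.{0}) : Module (ZMod p) (kapQuot p S β) :=
  QuotientAddGroup.zmodModule (by
    intro x
    have hx := x.2
    simp only [kapSub, AddSubgroup.mem_inf, AddSubgroup.mem_comap, pHom_apply] at hx
    simp only [AddSubgroup.mem_addSubgroupOf, AddSubgroup.mem_inf]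
    have hc : ((p • x : kapSub p S β) : B) = p • (x : B) := rfl
    rw [hc]
    refine ⟨S.nsmul_mem hx.1.1 p, ?_⟩
    have h2 : (β + 2 : Ordinal.{0}) = (β + 1) + 1 := by
      rw [add_assoc]; norm_num
    exact ulmSub_succ_le p B (β + 1) (by rw [← h2]; exact hx.2))

/-!
If `p x ∈ B_{β+2} = p B_{β+1}`, then `p x = p y` for some `y ∈ B_{β+1}`, and `x - y` is an element
of order `p` in `B_β`. Two such choices of `y` differ by an element of `P_{β+1}(B)`, so the class
of `x - y` in `P_β(B)/P_{β+1}(B)` depends only on `x`; it is additive in `x`, and it vanishes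
exactly when `x - y`, equivalently `x`, lies in `B_{β+1}`. Hence it descends to an injective map
on the quotient by `S ∩ B_{β+1}`.
-/

section UlmSubgroups

variable {p : ℕ} {G : Type*} [AddCommGroup G] {β : Ordinal.{0}}

lemma mem_ulmP_iff {x : G} : x ∈ ulmP p G β ↔ p • x = 0 ∧ x ∈ ulmSub p G β := Iff.rfl

lemma ulmSub_add_two :
    ulmSub p G (β + 2) = (ulmSub p G (β + 1)).map (pHom p G) := by
  rw [← ulmSub_succ, add_assoc, one_add_one_eq_two]

lemma exists_mem_ulmSub_succ_nsmul_eq {x : G} (hx : p • x ∈ ulmSub p G (β + 2)) :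
    ∃ y ∈ ulmSub p G (β + 1), p • y = p • x := by
  simpa [ulmSub_add_two] using hx

lemma sub_mem_ulmP {x y : G} (hx : x ∈ ulmSub p G β) (hy : y ∈ ulmSub p G (β + 1))
    (hyx : p • y = p • x) : x - y ∈ ulmP p G β :=
  mem_ulmP_iff.2 ⟨by rw [smul_sub, hyx, _root_.sub_self], sub_mem hx (ulmSub_succ_le p G β hy)⟩

lemma sub_sub_sub_mem_ulmP_succ {x y y' : G} (hy : y ∈ ulmSub p G (β + 1))
    (hy' : y' ∈ ulmSub p G (β + 1)) (hyx : p • y = p • x) (hy'x : p • y' = p • x) :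
    (x - y) - (x - y') ∈ ulmP p G (β + 1) := by
  rw [sub_sub_sub_cancel_left]
  exact mem_ulmP_iff.2 ⟨by rw [smul_sub, hy'x, hyx, _root_.sub_self], sub_mem hy' hy⟩

lemma ulmQuot_mk_eq_mk_iff {z z' : G} (hz : z ∈ ulmP p G β) (hz' : z' ∈ ulmP p G β) :
    (QuotientAddGroup.mk ⟨z, hz⟩ : ulmQuot p G β) = QuotientAddGroup.mk ⟨z', hz'⟩ ↔
      z - z' ∈ ulmP p G (β + 1) := by
  rw [QuotientAddGroup.eq, AddSubgroup.mem_addSubgroupOf]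
  change -z + z' ∈ _ ↔ _
  rw [neg_add_eq_sub, ← neg_sub, neg_mem_iff]

lemma ulmQuot_mk_eq_zero_iff {z : G} (hz : z ∈ ulmP p G β) :
    (QuotientAddGroup.mk ⟨z, hz⟩ : ulmQuot p G β) = 0 ↔ z ∈ ulmP p G (β + 1) := by
  rw [QuotientAddGroup.eq_zero_iff, AddSubgroup.mem_addSubgroupOf]

end UlmSubgroups

section KaplanskyMap

variable {p : ℕ} {B : Type*} [AddCommGroup B] {S : AddSubgroup B} {β : Ordinal.{0}}

lemma mem_ulmSub_of_mem_kapSub {x : B} (hx : x ∈ kapSub p S β) : x ∈ ulmSub p B β := hx.1.2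

lemma nsmul_mem_ulmSub_of_mem_kapSub {x : B} (hx : x ∈ kapSub p S β) :
    p • x ∈ ulmSub p B (β + 2) := hx.2

noncomputable def kaplanskyLift (x : kapSub p S β) : B :=
  (exists_mem_ulmSub_succ_nsmul_eq (nsmul_mem_ulmSub_of_mem_kapSub x.2)).choose

lemma kaplanskyLift_mem (x : kapSub p S β) : kaplanskyLift x ∈ ulmSub p B (β + 1) :=
  (exists_mem_ulmSub_succ_nsmul_eq (nsmul_mem_ulmSub_of_mem_kapSub x.2)).choose_spec.1

lemma nsmul_kaplanskyLift (x : kapSub p S β) : p • kaplanskyLift x = p • (x : B) :=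
  (exists_mem_ulmSub_succ_nsmul_eq (nsmul_mem_ulmSub_of_mem_kapSub x.2)).choose_spec.2

lemma sub_kaplanskyLift_mem_ulmP (x : kapSub p S β) : (x : B) - kaplanskyLift x ∈ ulmP p B β :=
  sub_mem_ulmP (mem_ulmSub_of_mem_kapSub x.2) (kaplanskyLift_mem x) (nsmul_kaplanskyLift x)

noncomputable def kaplanskyFun (x : kapSub p S β) : ulmQuot p B β :=
  QuotientAddGroup.mk ⟨x - kaplanskyLift x, sub_kaplanskyLift_mem_ulmP x⟩

lemma kaplanskyFun_eq (x : kapSub p S β) {y : B} (hy : y ∈ ulmSub p B (β + 1))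
    (hyx : p • y = p • (x : B)) (hxy : (x : B) - y ∈ ulmP p B β) :
    kaplanskyFun x = QuotientAddGroup.mk ⟨x - y, hxy⟩ :=
  (ulmQuot_mk_eq_mk_iff _ _).2
    (sub_sub_sub_mem_ulmP_succ (kaplanskyLift_mem x) hy (nsmul_kaplanskyLift x) hyx)

lemma kaplanskyFun_add (x x' : kapSub p S β) :
    kaplanskyFun (x + x') = kaplanskyFun x + kaplanskyFun x' := by
  have hy := add_mem (kaplanskyLift_mem x) (kaplanskyLift_mem x')
  have hyx : p • (kaplanskyLift x + kaplanskyLift x') = p • ((x + x' : kapSub p S β) : B) := by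
    rw [smul_add, nsmul_kaplanskyLift, nsmul_kaplanskyLift, AddSubgroup.coe_add, smul_add]
  rw [kaplanskyFun_eq (x + x') hy hyx
    (sub_mem_ulmP (mem_ulmSub_of_mem_kapSub (x + x').2) hy hyx)]
  exact congrArg QuotientAddGroup.mk (Subtype.ext (by push_cast; abel))

lemma kaplanskyFun_eq_zero_iff (x : kapSub p S β) :
    kaplanskyFun x = 0 ↔ (x : B) ∈ ulmSub p B (β + 1) := by
  refine (ulmQuot_mk_eq_zero_iff (sub_kaplanskyLift_mem_ulmP x)).trans ?_
  rw [mem_ulmP_iff]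
  constructor
  · rintro ⟨-, hxy⟩
    simpa using add_mem hxy (kaplanskyLift_mem x)
  · intro hx
    exact ⟨(mem_ulmP_iff.1 (sub_kaplanskyLift_mem_ulmP x)).1, sub_mem hx (kaplanskyLift_mem x)⟩

noncomputable def kaplanskyHom : kapSub p S β →+ ulmQuot p B β :=
  AddMonoidHom.mk' kaplanskyFun kaplanskyFun_add

lemma ker_kaplanskyHom :
    (kaplanskyHom : kapSub p S β →+ ulmQuot p B β).ker =
      (S ⊓ ulmSub p B (β + 1)).addSubgroupOf (kapSub p S β) := by
  ext x
  rw [AddMonoidHom.mem_ker, AddSubgroup.mem_addSubgroupOf, AddSubgroup.mem_inf]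
  exact (kaplanskyFun_eq_zero_iff x).trans (and_iff_right x.2.1.1).symm

noncomputable def kaplanskyMap : kapQuot p S β →ₗ[ZMod p] ulmQuot p B β :=
  AddMonoidHom.toZModLinearMap (M := kapQuot p S β) p
    (QuotientAddGroup.lift _ kaplanskyHom ker_kaplanskyHom.ge)

lemma kaplanskyMap_injective : Function.Injective (kaplanskyMap : kapQuot p S β →ₗ[ZMod p] _) :=
  (QuotientAddGroup.injective_lift_iff _ _ ker_kaplanskyHom.ge).2 ker_kaplanskyHom.symm

lemma kaplanskyMap_mk (x : kapSub p S β) :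
    kaplanskyMap (QuotientAddGroup.mk x : kapQuot p S β) = kaplanskyFun x := rfl

end KaplanskyMap

theorem kaplansky_map_general (p : ℕ) (B : Type) [AddCommGroup B]
    (S : AddSubgroup B) (β : Ordinal.{0}) :
    (∀ x ∈ S, x ∈ ulmSub p B β → p • x ∈ ulmSub p B (β + 2) →
      ∃ y ∈ ulmSub p B (β + 1), p • y = p • x) ∧
    (∀ x ∈ S, x ∈ ulmSub p B β → p • x ∈ ulmSub p B (β + 2) →
      ∀ y ∈ ulmSub p B (β + 1), p • y = p • x → x - y ∈ ulmP p B β) ∧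
    (∀ x ∈ S, x ∈ ulmSub p B β → p • x ∈ ulmSub p B (β + 2) →
      ∀ y ∈ ulmSub p B (β + 1), p • y = p • x →
      ∀ y' ∈ ulmSub p B (β + 1), p • y' = p • x →
        (x - y) - (x - y') ∈ ulmP p B (β + 1)) ∧
    ∃ F : kapQuot p S β →ₗ[ZMod p] ulmQuot p B β,
      Function.Injective F ∧
      ∀ (x : B) (hx : x ∈ kapSub p S β) (y : B), y ∈ ulmSub p B (β + 1) →
        p • y = p • x → ∀ hxy : x - y ∈ ulmP p B β,
        F (QuotientAddGroup.mk (⟨x, hx⟩ : kapSub p S β)) =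
          QuotientAddGroup.mk (⟨x - y, hxy⟩ : ulmP p B β) :=
  ⟨fun _ _ _ hpx => exists_mem_ulmSub_succ_nsmul_eq hpx,
    fun _ _ hx _ _ hy hyx => sub_mem_ulmP hx hy hyx,
    fun _ _ _ _ _ hy hyx _ hy' hy'x => sub_sub_sub_mem_ulmP_succ hy hy' hyx hy'x,
    kaplanskyMap, kaplanskyMap_injective,
    fun x hx _ hy hyx hxy => (kaplanskyMap_mk _).trans (kaplanskyFun_eq ⟨x, hx⟩ hy hyx hxy)⟩

/-- Kaplansky's lemma, part 1: existence and well-definedness of the induced injective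
`ℤ/pℤ`-linear map `F : (S ∩ B_β ∩ p⁻¹B_{β+2})/(S ∩ B_{β+1}) → P_β(B)/P_{β+1}(B)`. -/
theorem kaplansky_map (p : ℕ) (hp : p.Prime) (B : Type) [AddCommGroup B]
    (hB : IsAbelianPGroup p B) (hred : IsReducedPGroup p B)
    (S : AddSubgroup B) (hS : (S : Set B).Finite) (β : Ordinal.{0}) :
    (∀ x ∈ S, x ∈ ulmSub p B β → p • x ∈ ulmSub p B (β + 2) →
      ∃ y ∈ ulmSub p B (β + 1), p • y = p • x) ∧
    (∀ x ∈ S, x ∈ ulmSub p B β → p • x ∈ ulmSub p B (β + 2) →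
      ∀ y ∈ ulmSub p B (β + 1), p • y = p • x → x - y ∈ ulmP p B β) ∧
    (∀ x ∈ S, x ∈ ulmSub p B β → p • x ∈ ulmSub p B (β + 2) →
      ∀ y ∈ ulmSub p B (β + 1), p • y = p • x →
      ∀ y' ∈ ulmSub p B (β + 1), p • y' = p • x →
        (x - y) - (x - y') ∈ ulmP p B (β + 1)) ∧
    ∃ F : kapQuot p S β →ₗ[ZMod p] ulmQuot p B β,
      Function.Injective F ∧
      ∀ (x : B) (hx : x ∈ kapSub p S β) (y : B), y ∈ ulmSub p B (β + 1) →
        p • y = p • x → ∀ hxy : x - y ∈ ulmP p B β,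
        F (QuotientAddGroup.mk (⟨x, hx⟩ : kapSub p S β)) =
          QuotientAddGroup.mk (⟨x - y, hxy⟩ : ulmP p B β) :=
  kaplansky_map_general p B S β
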